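/- arXiv:2111.14769 — 2 statements merged into one kernel-verified Lean document; each statement's English description precedes it below -/
import Mathlib

section
/- For any p ∈ ℂ with |p| = 1 and any z ∈ ℂ with z ≠ p, the outer normal derivative of x ↦ log|x - p| at a point z of the unit circle equals 1/2; that is, the radial derivative ∂_r log|re^{iθ} - p| evaluated at r = 1 equals 1/2 whenever e^{iθ} ≠ p. -/
/-!
Since `log ‖x‖ = log (‖x‖ ^ 2) / 2`, the radial derivative of `log ‖r v - w‖` at `r = 1` is
`⟪v - w, v⟫ / ‖v - w‖ ^ 2`, and expanding the square gives
`2 ⟪v - w, v⟫ = ‖v - w‖ ^ 2 + ‖v‖ ^ 2 - ‖w‖ ^ 2` makes this exactly `1 / 2` when `‖v‖ = ‖w‖`.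
-/

open scoped RealInnerProductSpace

section LogNormAlongLine

variable {E : Type*} [NormedAddCommGroup E] [InnerProductSpace ℝ E]

theorem two_mul_real_inner_sub_left_self (v w : E) :
    2 * ⟪v - w, v⟫ = ‖v - w‖ ^ 2 + ‖v‖ ^ 2 - ‖w‖ ^ 2 := by
  rw [norm_sub_sq_real, inner_sub_left, real_inner_self_eq_norm_sq, real_inner_comm]
  ring

theorem hasDerivAt_log_norm_smul_sub (v w : E) {r : ℝ} (h : r • v - w ≠ 0) :
    HasDerivAt (fun s : ℝ => Real.log ‖s • v - w‖) (⟪r • v - w, v⟫ / ‖r • v - w‖ ^ 2) r := by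
  have hline : HasDerivAt (fun s : ℝ => s • v - w) v r := by
    simpa using ((hasDerivAt_id r).smul_const v).sub_const w
  have hlog_sq := (hline.norm_sq.log (by positivity)).div_const 2
  have hfun : (fun s : ℝ => Real.log ‖s • v - w‖) = fun s => Real.log (‖s • v - w‖ ^ 2) / 2 := by
    funext s
    rw [Real.log_pow]
    push_cast
    ring
  rw [hfun]
  exact hlog_sq.congr_deriv (by ring)

theorem hasDerivAt_log_norm_smul_sub_one_of_norm_eq {v w : E} (hvw : v ≠ w) (hnorm : ‖v‖ = ‖w‖) :
    HasDerivAt (fun r : ℝ => Real.log ‖r • v - w‖) (1 / 2) 1 := by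
  have hsub : v - w ≠ 0 := sub_ne_zero.mpr hvw
  have hinner : ⟪v - w, v⟫ = ‖v - w‖ ^ 2 / 2 := by
    linarith [hnorm ▸ two_mul_real_inner_sub_left_self v w]
  convert hasDerivAt_log_norm_smul_sub v w (r := 1) (by rwa [one_smul]) using 1
  rw [one_smul, hinner]
  field_simp

end LogNormAlongLine

/-- For `p` on the unit circle and `z ≠ p` on the unit circle, the outer normal
(radial) derivative of `x ↦ log |x - p|` at `z`, i.e. the derivative of
`r ↦ log |r z - p|` at `r = 1`, equals `1/2`. -/
theorem radial_deriv_log_dist (p z : ℂ) (hp : ‖p‖ = 1)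
    (hz : ‖z‖ = 1) (hzp : z ≠ p) :
    HasDerivAt (fun r : ℝ => Real.log ‖(r : ℂ) * z - p‖) (1 / 2) 1 := by
  simpa only [Complex.real_smul] using
    hasDerivAt_log_norm_smul_sub_one_of_norm_eq hzp (hz.trans hp.symm)
end

section
/- Let (φ_n) be a sequence in the fractional Sobolev space H^{1/2}(∂D²) converging to φ in H^{1/2}(∂D²), and let F : ℝ → ℝ^m be Lipschitz continuous. Then F∘φ_n → F∘φ in H^{1/2}(∂D², ℝ^m). -/
open Complex MeasureTheory Filter Topology ENNReal

/-- The Gagliardo `H^{1/2}` seminorm (squared) of a map on the unit circle,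
parametrized by arc length `θ ↦ e^{iθ}`. -/
noncomputable def gagliardo {E : Type*} [NormedAddCommGroup E] (u : ℝ → E) : ℝ≥0∞ :=
  ∫⁻ θ in Set.Ioc (0 : ℝ) (2 * Real.pi), ∫⁻ η in Set.Ioc (0 : ℝ) (2 * Real.pi),
    ENNReal.ofReal (‖u θ - u η‖ ^ 2 /
      ‖Complex.exp (θ * Complex.I) - Complex.exp (η * Complex.I)‖ ^ 2)

/-- The squared `L²` norm on the unit circle. -/
noncomputable def circleL2 {E : Type*} [NormedAddCommGroup E] (u : ℝ → E) : ℝ≥0∞ :=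
  ∫⁻ θ in Set.Ioc (0 : ℝ) (2 * Real.pi), ENNReal.ofReal (‖u θ‖ ^ 2)

/-! The `L²` part is immediate from `‖F a - F b‖ ≤ K ‖a - b‖`. The Gagliardo seminorm of
`F ∘ φₙ - F ∘ φ` is not controlled by that of `φₙ - φ`, so we argue by dominated convergence.
Every subsequence has a further one along which `∑ₖ ([φₖ - φ]² + ‖φₖ - φ‖²_{L²}) < ∞`, and it
suffices to show convergence along those. There `φₖ → φ` a.e., hence the Gagliardo kernel of `F ∘ φₖ - F ∘ φ` tends to `0` a.e. on the torus,
and the pointwise estimate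
`‖(F a - F b) - (F c - F d)‖² ≤ 2K² ‖(a - b) - (c - d)‖² + 8K² ‖b - d‖²`
dominates it by `2K² ∑ₖ kernel(φₖ - φ) + 8K² kernel(φ)`, which is integrable. -/

theorem ENNReal.exists_strictMono_tsum_ne_top_of_tendsto_zero {a : ℕ → ℝ≥0∞}
    (ha : Tendsto a atTop (𝓝 0)) : ∃ ns : ℕ → ℕ, StrictMono ns ∧ ∑' k, a (ns k) ≠ ⊤ := by
  have hsmall : ∀ k : ℕ, ∀ᶠ n in atTop, a n ≤ 2⁻¹ ^ k := fun k =>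
    (ENNReal.tendsto_nhds_zero.mp ha) _ (ENNReal.pow_pos (ENNReal.inv_pos.2 ENNReal.ofNat_ne_top) k)
  obtain ⟨ns, hns, hle⟩ := extraction_forall_of_eventually hsmall
  refine ⟨ns, hns, ne_top_of_le_ne_top ?_ (ENNReal.tsum_le_tsum hle)⟩
  rw [ENNReal.tsum_geometric, ENNReal.one_sub_inv_two, inv_inv]
  exact ENNReal.ofNat_ne_top

theorem ae_tendsto_zero_of_tsum_lintegral_ne_top {X : Type*} [MeasurableSpace X]
    {μ : Measure X} {f : ℕ → X → ℝ≥0∞}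
    (hf : ∀ k, AEMeasurable (f k) μ) (hsum : ∑' k, ∫⁻ x, f k x ∂μ ≠ ⊤) :
    ∀ᵐ x ∂μ, Tendsto (fun k => f k x) atTop (𝓝 0) := by
  rw [← lintegral_tsum hf] at hsum
  filter_upwards [ae_lt_top' (AEMeasurable.tsum hf) hsum] with x hx
  exact ENNReal.tendsto_atTop_zero_of_tsum_ne_top hx.ne

theorem tendsto_zero_of_tendsto_ofReal_norm_sq {ι E : Type*} [SeminormedAddGroup E]
    {l : Filter ι} {w : ι → E} (h : Tendsto (fun i => ENNReal.ofReal (‖w i‖ ^ 2)) l (𝓝 0)) :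
    Tendsto w l (𝓝 0) := by
  simp only [ENNReal.ofReal_pow (norm_nonneg _), ofReal_norm] at h
  rw [tendsto_zero_iff_enorm_tendsto_zero]
  have hroot : Tendsto (fun i => (‖w i‖ₑ ^ 2) ^ ((2 : ℕ)⁻¹ : ℝ)) l (𝓝 0) := by
    have hcont := (ENNReal.continuous_rpow_const (y := ((2 : ℕ)⁻¹ : ℝ))).tendsto 0
    rw [ENNReal.zero_rpow_of_pos (by positivity)] at hcont
    exact hcont.comp h
  simpa only [ENNReal.pow_rpow_inv_natCast two_ne_zero] using hroot

theorem ae_prod_fst_and_snd {Y : Type*} [MeasurableSpace Y] {P : Y → Prop} {ν : Measure Y}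
    (h : ∀ᵐ y ∂ν, P y) : ∀ᵐ p ∂ν.prod ν, P p.1 ∧ P p.2 :=
  (Measure.quasiMeasurePreserving_fst.ae h).and (Measure.quasiMeasurePreserving_snd.ae h)

theorem LipschitzWith.norm_sub_sub_sq_le {α E : Type*} [SeminormedAddCommGroup α]
    [SeminormedAddCommGroup E] {K : NNReal} {F : α → E} (hF : LipschitzWith K F) (a b c d : α) :
    ‖(F a - F b) - (F c - F d)‖ ^ 2 ≤
      2 * K ^ 2 * ‖(a - b) - (c - d)‖ ^ 2 + 8 * K ^ 2 * ‖b - d‖ ^ 2 := by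
  have hac : ‖a - c‖ ≤ ‖(a - b) - (c - d)‖ + ‖b - d‖ := by
    have h := norm_add_le ((a - b) - (c - d)) (b - d)
    rwa [show (a - b) - (c - d) + (b - d) = a - c by abel] at h
  have hlin : ‖(F a - F b) - (F c - F d)‖ ≤ K * (‖(a - b) - (c - d)‖ + 2 * ‖b - d‖) := by
    calc ‖(F a - F b) - (F c - F d)‖ ≤ K * (‖a - c‖ + ‖b - d‖) := by
          simp only [mul_add, ← dist_eq_norm]
          exact (dist_sub_sub_le _ _ _ _).trans
            (add_le_add (hF.dist_le_mul a c) (hF.dist_le_mul b d))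
      _ ≤ K * (‖(a - b) - (c - d)‖ + 2 * ‖b - d‖) :=
          mul_le_mul_of_nonneg_left (by linarith) K.coe_nonneg
  calc ‖(F a - F b) - (F c - F d)‖ ^ 2
      ≤ (K * (‖(a - b) - (c - d)‖ + 2 * ‖b - d‖)) ^ 2 := by gcongr
    _ = K ^ 2 * (‖(a - b) - (c - d)‖ + 2 * ‖b - d‖) ^ 2 := by ring
    _ ≤ K ^ 2 * (2 * (‖(a - b) - (c - d)‖ ^ 2 + (2 * ‖b - d‖) ^ 2)) := by gcongr; exact add_sq_le
    _ = _ := by ring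

section Circle

variable {E : Type*} [NormedAddCommGroup E]

noncomputable abbrev circleMeasure : Measure ℝ := volume.restrict (Set.Ioc 0 (2 * Real.pi))

noncomputable def gagliardoKernel (u : ℝ → E) (p : ℝ × ℝ) : ℝ≥0∞ :=
  ENNReal.ofReal (‖u p.1 - u p.2‖ ^ 2 /
    ‖Complex.exp (p.1 * Complex.I) - Complex.exp (p.2 * Complex.I)‖ ^ 2)

theorem measurable_gagliardoKernel [MeasurableSpace E] [BorelSpace E] [SecondCountableTopology E]
    {u : ℝ → E} (hu : Measurable u) : Measurable (gagliardoKernel u) := by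
  unfold gagliardoKernel
  fun_prop

theorem gagliardo_eq_lintegral_prod [MeasurableSpace E] [BorelSpace E]
    [SecondCountableTopology E] {u : ℝ → E} (hu : Measurable u) :
    gagliardo u = ∫⁻ p, gagliardoKernel u p ∂circleMeasure.prod circleMeasure :=
  (lintegral_prod _ (measurable_gagliardoKernel hu).aemeasurable).symm

theorem tendsto_gagliardoKernel_zero {w : ℕ → ℝ → E} {p : ℝ × ℝ}
    (h₁ : Tendsto (fun k => w k p.1) atTop (𝓝 0)) (h₂ : Tendsto (fun k => w k p.2) atTop (𝓝 0)) :
    Tendsto (fun k => gagliardoKernel (w k) p) atTop (𝓝 0) := by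
  have h := ENNReal.tendsto_ofReal (((h₁.sub h₂).norm.pow 2).div_const
    (‖Complex.exp (p.1 * Complex.I) - Complex.exp (p.2 * Complex.I)‖ ^ 2))
  simpa [gagliardoKernel] using h

theorem ae_tendsto_zero_of_tsum_circleL2_ne_top [MeasurableSpace E] [BorelSpace E]
    {u : ℕ → ℝ → E} (hu : ∀ k, Measurable (u k)) (hsum : ∑' k, circleL2 (u k) ≠ ⊤) :
    ∀ᵐ θ ∂circleMeasure, Tendsto (fun k => u k θ) atTop (𝓝 0) := by
  have hmeas k : AEMeasurable (fun θ => ENNReal.ofReal (‖u k θ‖ ^ 2)) circleMeasure := by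
    fun_prop
  filter_upwards [ae_tendsto_zero_of_tsum_lintegral_ne_top hmeas hsum] with θ hθ
  exact tendsto_zero_of_tendsto_ofReal_norm_sq hθ

variable {α : Type*} [NormedAddCommGroup α] {K : NNReal} {F : α → E}

theorem LipschitzWith.circleL2_comp_sub_le (hF : LipschitzWith K F) (u v : ℝ → α) :
    circleL2 (fun θ => F (u θ) - F (v θ)) ≤ (K : ℝ≥0∞) ^ 2 * circleL2 (fun θ => u θ - v θ) := by
  rw [circleL2, circleL2, ← lintegral_const_mul' _ _ (by simp)]
  refine lintegral_mono fun θ => ?_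
  simp only [ENNReal.ofReal_pow (norm_nonneg _), ofReal_norm, ← edist_eq_enorm_sub, ← mul_pow]
  gcongr
  exact hF (u θ) (v θ)

theorem LipschitzWith.gagliardoKernel_comp_sub_le (hF : LipschitzWith K F) (u v : ℝ → α)
    (p : ℝ × ℝ) :
    gagliardoKernel (fun θ => F (u θ) - F (v θ)) p ≤
      ENNReal.ofReal (2 * K ^ 2) * gagliardoKernel (fun θ => u θ - v θ) p +
        ENNReal.ofReal (8 * K ^ 2) * gagliardoKernel v p := by
  set D := ‖Complex.exp (p.1 * Complex.I) - Complex.exp (p.2 * Complex.I)‖ ^ 2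
  have hD : 0 ≤ D := by positivity
  simp only [gagliardoKernel]
  rw [← ENNReal.ofReal_mul (by positivity), ← ENNReal.ofReal_mul (by positivity),
    ← ENNReal.ofReal_add (by positivity) (by positivity)]
  refine ENNReal.ofReal_le_ofReal ?_
  calc ‖(F (u p.1) - F (v p.1)) - (F (u p.2) - F (v p.2))‖ ^ 2 / D
      ≤ (2 * K ^ 2 * ‖(u p.1 - v p.1) - (u p.2 - v p.2)‖ ^ 2 +
          8 * K ^ 2 * ‖v p.1 - v p.2‖ ^ 2) / D := by
        gcongr
        exact hF.norm_sub_sub_sq_le (u p.1) (v p.1) (u p.2) (v p.2)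
    _ = _ := by ring

theorem LipschitzWith.tendsto_gagliardo_comp_sub_of_tsum_ne_top
    [MeasurableSpace E] [BorelSpace E] [SecondCountableTopology E]
    [MeasurableSpace α] [BorelSpace α] [SecondCountableTopology α]
    (hF : LipschitzWith K F) {u : ℕ → ℝ → α} {v : ℝ → α}
    (hu : ∀ k, Measurable (u k)) (hv : Measurable v) (hvG : gagliardo v ≠ ⊤)
    (hG : ∑' k, gagliardo (fun θ => u k θ - v θ) ≠ ⊤)
    (hL : ∑' k, circleL2 (fun θ => u k θ - v θ) ≠ ⊤) :
    Tendsto (fun k => gagliardo (fun θ => F (u k θ) - F (v θ))) atTop (𝓝 0) := by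
  have hFu k : Measurable (fun θ => F (u k θ) - F (v θ)) :=
    (hF.continuous.measurable.comp (hu k)).sub (hF.continuous.measurable.comp hv)
  have hdiff k : Measurable (fun θ => u k θ - v θ) := (hu k).sub hv
  set bound : ℝ × ℝ → ℝ≥0∞ := fun p =>
    ENNReal.ofReal (2 * K ^ 2) * ∑' k, gagliardoKernel (fun θ => u k θ - v θ) p +
      ENNReal.ofReal (8 * K ^ 2) * gagliardoKernel v p
  have hle k : gagliardoKernel (fun θ => F (u k θ) - F (v θ)) ≤ bound := fun p =>
    (hF.gagliardoKernel_comp_sub_le (u k) v p).trans <| by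
      dsimp only [bound]
      gcongr
      exact ENNReal.le_tsum k
  have hbound : ∫⁻ p, bound p ∂circleMeasure.prod circleMeasure ≠ ⊤ := by
    have hmeas : Measurable fun p => ∑' k, gagliardoKernel (fun θ => u k θ - v θ) p :=
      Measurable.tsum fun k => measurable_gagliardoKernel (hdiff k)
    rw [lintegral_add_left (hmeas.const_mul _), lintegral_const_mul _ hmeas,
      lintegral_const_mul _ (measurable_gagliardoKernel hv), lintegral_tsum
        fun k => (measurable_gagliardoKernel (hdiff k)).aemeasurable,
      ← gagliardo_eq_lintegral_prod hv]
    simp only [← gagliardo_eq_lintegral_prod (hdiff _)]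
    exact ENNReal.add_ne_top.2 ⟨ENNReal.mul_ne_top ENNReal.ofReal_ne_top hG,
      ENNReal.mul_ne_top ENNReal.ofReal_ne_top hvG⟩
  have hlim : ∀ᵐ p ∂circleMeasure.prod circleMeasure,
      Tendsto (fun k => gagliardoKernel (fun θ => F (u k θ) - F (v θ)) p) atTop (𝓝 0) := by
    filter_upwards [ae_prod_fst_and_snd (ae_tendsto_zero_of_tsum_circleL2_ne_top hdiff hL)]
      with p ⟨h₁, h₂⟩
    have hFlim {θ : ℝ} (h : Tendsto (fun k => u k θ - v θ) atTop (𝓝 0)) :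
        Tendsto (fun k => F (u k θ) - F (v θ)) atTop (𝓝 0) :=
      tendsto_sub_nhds_zero_iff.2 ((hF.continuous.tendsto _).comp (tendsto_sub_nhds_zero_iff.1 h))
    exact tendsto_gagliardoKernel_zero (hFlim h₁) (hFlim h₂)
  have hdom := tendsto_lintegral_of_dominated_convergence bound
    (fun k => measurable_gagliardoKernel (hFu k)) (fun k => ae_of_all _ (hle k)) hbound hlim
  simpa only [lintegral_zero, ← gagliardo_eq_lintegral_prod (hFu _)] using hdom

end Circle

theorem lipschitz_comp_H_half_convergence_general (m : ℕ) (K : NNReal)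
    (F : ℝ → EuclideanSpace ℝ (Fin m)) (hF : LipschitzWith K F)
    (φ : ℝ → ℝ) (φn : ℕ → ℝ → ℝ) (hφm : Measurable φ) (hφnm : ∀ n, Measurable (φn n))
    (hφH : gagliardo φ ≠ ⊤)
    (hconv : Tendsto
      (fun n => gagliardo (fun θ => φn n θ - φ θ) + circleL2 (fun θ => φn n θ - φ θ))
      atTop (𝓝 0)) :
    Tendsto
      (fun n => gagliardo (fun θ => F (φn n θ) - F (φ θ)) +
        circleL2 (fun θ => F (φn n θ) - F (φ θ)))
      atTop (𝓝 0) := by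
  have hG : Tendsto (fun n => gagliardo (fun θ => F (φn n θ) - F (φ θ))) atTop (𝓝 0) := by
    refine tendsto_of_subseq_tendsto fun ns hns => ?_
    obtain ⟨ms, -, hsum⟩ :=
      ENNReal.exists_strictMono_tsum_ne_top_of_tendsto_zero (hconv.comp hns)
    rw [Function.comp_def, ENNReal.tsum_add, ENNReal.add_ne_top] at hsum
    exact ⟨ms, hF.tendsto_gagliardo_comp_sub_of_tsum_ne_top (fun k => hφnm _) hφm hφH
      hsum.1 hsum.2⟩
  have hL2 : Tendsto (fun n => circleL2 (fun θ => F (φn n θ) - F (φ θ))) atTop (𝓝 0) := by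
    have hdom := ENNReal.Tendsto.const_mul hconv (Or.inr (by simp : (K : ℝ≥0∞) ^ 2 ≠ ⊤))
    rw [mul_zero] at hdom
    refine tendsto_of_tendsto_of_tendsto_of_le_of_le tendsto_const_nhds hdom (fun n => zero_le)
      fun n => (hF.circleL2_comp_sub_le (φn n) φ).trans ?_
    gcongr
    exact le_add_self
  simpa using hG.add hL2

/-- If `φₙ → φ` in `H^{1/2}(∂D²)` and `F : ℝ → ℝᵐ` is Lipschitz, then
`F∘φₙ → F∘φ` in `H^{1/2}(∂D², ℝᵐ)`. -/
theorem lipschitz_comp_H_half_convergence (m : ℕ) (K : NNReal)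
    (F : ℝ → EuclideanSpace ℝ (Fin m)) (hF : LipschitzWith K F)
    (φ : ℝ → ℝ) (φn : ℕ → ℝ → ℝ) (hφm : Measurable φ) (hφnm : ∀ n, Measurable (φn n))
    (hφH : gagliardo φ ≠ ⊤) (hφL2 : circleL2 φ ≠ ⊤)
    (hφnH : ∀ n, gagliardo (φn n) ≠ ⊤)
    (hconv : Tendsto
      (fun n => gagliardo (fun θ => φn n θ - φ θ) + circleL2 (fun θ => φn n θ - φ θ))
      atTop (𝓝 0)) :
    Tendsto
      (fun n => gagliardo (fun θ => F (φn n θ) - F (φ θ)) +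
        circleL2 (fun θ => F (φn n θ) - F (φ θ)))
      atTop (𝓝 0) :=
  lipschitz_comp_H_half_convergence_general m K F hF φ φn hφm hφnm hφH hconv
end
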